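/- For every h = (h₁,…,h_N) ∈ {0,1}^N one has the division-free identity ∏_{n=1}^N (−a(ξ_n))^{h_n} · V(ξ₁ − h₁η, …, ξ_N − h_Nη) = ∏_{n=1}^N d(ξ_n − η)^{h_n} · V(ξ₁ − (1−h₁)η, …, ξ_N − (1−h_N)η), and moreover V(ξ₁ − (1−h₁)η, …, ξ_N − (1−h_N)η) = V(ξ₁ + h₁η, …, ξ_N + h_Nη). -/
import Mathlib


open Complex Finset

noncomputable section

/-- generalized Vandermonde product `V(x₁,…,x_m) = ∏_{i<j} sinh(x_j − x_i)` -/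
def Vand {m : ℕ} (x : Fin m → ℂ) : ℂ :=
  ∏ i : Fin m, ∏ j ∈ Finset.Ioi i, Complex.sinh (x j - x i)

/-- `a(λ) = ∏ sinh(λ − ξ_n + η)` -/
def afun {N : ℕ} (η : ℂ) (ξ : Fin N → ℂ) (l : ℂ) : ℂ :=
  ∏ n, Complex.sinh (l - ξ n + η)

/-- `d(λ) = ∏ sinh(λ − ξ_n)` -/
def dfun {N : ℕ} (ξ : Fin N → ℂ) (l : ℂ) : ℂ :=
  ∏ n, Complex.sinh (l - ξ n)

/-- For every binary tuple `h ∈ {0,1}^N`: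
`∏ (−a(ξ_n))^{h_n} · V(ξ − hη) = ∏ d(ξ_n−η)^{h_n} · V(ξ − (1−h)η)` and
`V(ξ − (1−h)η) = V(ξ + hη)`. -/
lemma pair_split {N : ℕ} (g : Fin N → Fin N → ℂ) :
    ∏ i, ∏ j, g i j = (∏ i, g i i) * ∏ i, ∏ j ∈ Finset.Ioi i, (g i j * g j i) := by
  have key : ∏ i, ∏ j ∈ Finset.Ioi i, (g i j * g j i)
      = ∏ i, ∏ j ∈ ({i}ᶜ : Finset (Fin N)), g i j := by
    have := Finset.prod_prod_Ioi_mul_eq_prod_prod_off_diag (f := fun a b => g b a)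
    refine this.trans (Finset.prod_congr rfl fun i _ =>
      Finset.prod_congr (by ext j; simp) fun _ _ => rfl)
  rw [key, ← Finset.prod_mul_distrib]
  exact Finset.prod_congr rfl fun i _ => by
    rw [← Finset.prod_mul_prod_compl {i} (g i), Finset.prod_singleton]

lemma Vand_shift {m : ℕ} (x : Fin m → ℂ) (c : ℂ) :
    Vand (fun n => x n - c) = Vand x := by
  simp [Vand, sub_sub_sub_cancel_right]

lemma pair_eq (η a b : ℂ) (p q : Fin 2) :
    Complex.sinh (a - b + η) ^ (p:ℕ) * Complex.sinh (b - a + η) ^ (q:ℕ) *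
      Complex.sinh ((b - (q:ℕ)*η) - (a - (p:ℕ)*η))
  = Complex.sinh (a - η - b) ^ (p:ℕ) * Complex.sinh (b - η - a) ^ (q:ℕ) *
      Complex.sinh ((b + (q:ℕ)*η) - (a + (p:ℕ)*η)) := by
  fin_cases p <;> fin_cases q <;>
    simp only [Fin.val_zero, Fin.val_one, pow_zero, pow_one, one_mul, mul_one,
      Nat.cast_zero, Nat.cast_one, zero_mul, one_mul, sub_zero, add_zero]
  · ring_nf
  · rw [show a - η - b = -(b - a + η) by ring, show b - (a + η) = -(a - b + η) by ring,
      Complex.sinh_neg, Complex.sinh_neg, show b - (a - η) = b - a + η by ring]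
    ring
  · rw [show a - η - b = -(b - a + η) by ring, show b - η - a = -(a - b + η) by ring,
      Complex.sinh_neg, Complex.sinh_neg, show b - η - (a - η) = b - a by ring,
      show b + η - (a + η) = b - a by ring]
    ring

theorem sov_measure_identity (N : ℕ) (hN : 1 ≤ N) (η : ℂ) (ξ : Fin N → ℂ)
    (h : Fin N → Fin 2) :
    ((∏ n, (-(afun η ξ (ξ n))) ^ (h n : ℕ)) *
        Vand (fun n => ξ n - ((h n : ℕ) : ℂ) * η) =
      (∏ n, (dfun ξ (ξ n - η)) ^ (h n : ℕ)) *
        Vand (fun n => ξ n - ((1 - (h n : ℕ) : ℕ) : ℂ) * η)) ∧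
    Vand (fun n => ξ n - ((1 - (h n : ℕ) : ℕ) : ℂ) * η) =
      Vand (fun n => ξ n + ((h n : ℕ) : ℂ) * η) := by
  have key2 : (fun n => ξ n - ((1 - (h n : ℕ) : ℕ) : ℂ) * η)
      = fun n => (ξ n + ((h n : ℕ) : ℂ) * η) - η := by
    funext n
    have hn : (h n : ℕ) = 0 ∨ (h n : ℕ) = 1 := by omega
    rcases hn with hn | hn <;> rw [hn] <;> push_cast <;> ring
  have part2 : Vand (fun n => ξ n - ((1 - (h n : ℕ) : ℕ) : ℂ) * η) =
      Vand (fun n => ξ n + ((h n : ℕ) : ℂ) * η) := by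
    rw [key2, Vand_shift]
  refine ⟨?_, part2⟩
  rw [part2]
  have expandL : (∏ n, (-(afun η ξ (ξ n))) ^ (h n : ℕ))
      = ((∏ n, (-1 : ℂ) ^ (h n : ℕ)) * (∏ n, Complex.sinh η ^ (h n : ℕ))) *
        ∏ i, ∏ j ∈ Finset.Ioi i,
          (Complex.sinh (ξ i - ξ j + η) ^ (h i : ℕ) *
           Complex.sinh (ξ j - ξ i + η) ^ (h j : ℕ)) := by
    have e1 : ∀ n, (-(afun η ξ (ξ n))) ^ (h n : ℕ)
        = (-1 : ℂ) ^ (h n : ℕ) * ∏ m, Complex.sinh (ξ n - ξ m + η) ^ (h n : ℕ) := by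
      intro n
      rw [afun, ← neg_one_mul, mul_pow, ← Finset.prod_pow]
    have e2 : (∏ n, (-(afun η ξ (ξ n))) ^ (h n : ℕ))
        = (∏ n, (-1 : ℂ) ^ (h n : ℕ)) *
          ∏ n, ∏ m, Complex.sinh (ξ n - ξ m + η) ^ (h n : ℕ) := by
      rw [← Finset.prod_mul_distrib]
      exact Finset.prod_congr rfl fun n _ => e1 n
    rw [e2, pair_split (fun n m => Complex.sinh (ξ n - ξ m + η) ^ (h n : ℕ))]
    simp only [sub_self, zero_add]
    ring
  have expandR : (∏ n, (dfun ξ (ξ n - η)) ^ (h n : ℕ))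
      = ((∏ n, (-1 : ℂ) ^ (h n : ℕ)) * (∏ n, Complex.sinh η ^ (h n : ℕ))) *
        ∏ i, ∏ j ∈ Finset.Ioi i,
          (Complex.sinh (ξ i - η - ξ j) ^ (h i : ℕ) *
           Complex.sinh (ξ j - η - ξ i) ^ (h j : ℕ)) := by
    have e1 : ∀ n, (dfun ξ (ξ n - η)) ^ (h n : ℕ)
        = ∏ m, Complex.sinh (ξ n - η - ξ m) ^ (h n : ℕ) := by
      intro n
      rw [dfun, ← Finset.prod_pow]
    have e2 : (∏ n, (dfun ξ (ξ n - η)) ^ (h n : ℕ))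
        = ∏ n, ∏ m, Complex.sinh (ξ n - η - ξ m) ^ (h n : ℕ) :=
      Finset.prod_congr rfl fun n _ => e1 n
    rw [e2, pair_split (fun n m => Complex.sinh (ξ n - η - ξ m) ^ (h n : ℕ))]
    have ed : ∀ n : Fin N, Complex.sinh (ξ n - η - ξ n) ^ (h n : ℕ)
        = (-1 : ℂ) ^ (h n : ℕ) * Complex.sinh η ^ (h n : ℕ) := by
      intro n
      rw [show ξ n - η - ξ n = -η by ring, Complex.sinh_neg, ← neg_one_mul, mul_pow]
    have e3 : (∏ n, Complex.sinh (ξ n - η - ξ n) ^ (h n : ℕ))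
        = (∏ n, (-1 : ℂ) ^ (h n : ℕ)) * (∏ n, Complex.sinh η ^ (h n : ℕ)) := by
      rw [← Finset.prod_mul_distrib]
      exact Finset.prod_congr rfl fun n _ => ed n
    rw [e3]
  rw [expandL, expandR, Vand, Vand]
  have ASSOC : ∀ C Q₁ V₁ Q₂ V₂ : ℂ, Q₁ * V₁ = Q₂ * V₂ → (C * Q₁) * V₁ = (C * Q₂) * V₂ := by
    intro C Q₁ V₁ Q₂ V₂ hqv
    rw [mul_assoc, mul_assoc, hqv]
  apply ASSOC
  rw [← Finset.prod_mul_distrib, ← Finset.prod_mul_distrib]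
  refine Finset.prod_congr rfl fun i _ => ?_
  rw [← Finset.prod_mul_distrib, ← Finset.prod_mul_distrib]
  refine Finset.prod_congr rfl fun j _ => ?_
  exact pair_eq η (ξ i) (ξ j) (h i) (h j)


end
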